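/- arXiv:1810.10082 — 2 statements merged into one kernel-verified Lean document; each statement's English description precedes it below -/
import Mathlib

section
/- The function β(t) = (X^T X)^+ (I - exp(-t X^T X/n)) X^T y satisfies the gradient flow ODE β'(t) = (X^T/n)(y - Xβ(t)) with initial condition β(0) = 0. -/
open Matrix

/-- `Xp` is the Moore–Penrose pseudoinverse of `A`, expressed via the four
Penrose conditions. -/
def IsMoorePenroseInv {p : ℕ} (A Ap : Matrix (Fin p) (Fin p) ℝ) : Prop :=
  A * Ap * A = A ∧ Ap * A * Ap = Ap ∧ (A * Ap)ᵀ = A * Ap ∧ (Ap * A)ᵀ = Ap * A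

/-- The gradient flow path `β(t) = (XᵀX)⁺ (I - exp(-t XᵀX/n)) Xᵀy` satisfies
`β(0) = 0` and the ODE `β'(t) = (Xᵀ/n)(y - Xβ(t))`. -/
theorem gradient_flow_solves_ode {n p : ℕ} (hn : 0 < n)
    (X : Matrix (Fin n) (Fin p) ℝ) (y : Fin n → ℝ)
    (Xp : Matrix (Fin p) (Fin p) ℝ) (hXp : IsMoorePenroseInv (Xᵀ * X) Xp) :
    let β : ℝ → (Fin p → ℝ) := fun t =>
      (Xp * (1 - NormedSpace.exp ((-(t / (n : ℝ))) • (Xᵀ * X)))) *ᵥ (Xᵀ *ᵥ y)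
    β 0 = 0 ∧ ∀ t : ℝ, HasDerivAt β ((n : ℝ)⁻¹ • (Xᵀ *ᵥ (y - X *ᵥ β t))) t := by
  intro β
  letI : NormedRing (Matrix (Fin p) (Fin p) ℝ) := Matrix.linftyOpNormedRing
  letI : NormedAlgebra ℝ (Matrix (Fin p) (Fin p) ℝ) := Matrix.linftyOpNormedAlgebra
  set A : Matrix (Fin p) (Fin p) ℝ := Xᵀ * X with hA
  obtain ⟨h1, h2, h3, h4⟩ := hXp
  have hAt : Aᵀ = A := by simp [hA, Matrix.transpose_mul]
  have hQA : Xp * A * A = A := by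
    have e : (Xp * A * A)ᵀ = A := by
      rw [Matrix.transpose_mul, h4, hAt, ← Matrix.mul_assoc, h1]
    calc Xp * A * A = (Xp * A * A)ᵀᵀ := (Matrix.transpose_transpose _).symm
      _ = Aᵀ := by rw [e]
      _ = A := hAt
  have hAP : A * A * Xp = A := by
    have e : (A * (A * Xp))ᵀ = A := by
      rw [Matrix.transpose_mul, h3, hAt, h1]
    rw [Matrix.mul_assoc]
    calc A * (A * Xp) = (A * (A * Xp))ᵀᵀ := (Matrix.transpose_transpose _).symm
      _ = Aᵀ := by rw [e]
      _ = A := hAt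
  have hXH : Xᴴ = Xᵀ := Matrix.conjTranspose_eq_transpose_of_trivial X
  have hQX : Xp * A * Xᵀ = Xᵀ := by
    have hz : (Xp * A - 1) * (Xᴴ * X) = 0 := by
      rw [hXH, ← hA, Matrix.sub_mul, Matrix.one_mul, hQA, sub_self]
    have := (Matrix.mul_conjTranspose_mul_self_eq_zero X (Xp * A - 1)).mp hz
    rw [hXH, Matrix.sub_mul, Matrix.one_mul, sub_eq_zero] at this
    exact this
  have hPX : A * Xp * Xᵀ = Xᵀ := by
    have hz : (A * Xp - 1) * (Xᴴ * X) = 0 := by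
      rw [hXH, ← hA, Matrix.sub_mul, Matrix.one_mul, h1, sub_self]
    have := (Matrix.mul_conjTranspose_mul_self_eq_zero X (A * Xp - 1)).mp hz
    rw [hXH, Matrix.sub_mul, Matrix.one_mul, sub_eq_zero] at this
    exact this
  set B : Matrix (Fin p) (Fin p) ℝ := (-(n : ℝ)⁻¹) • A with hB
  have hn' : (n : ℝ) ≠ 0 := Nat.cast_ne_zero.mpr hn.ne'
  have hsm : ∀ t : ℝ, (-(t / (n : ℝ))) • A = t • B := by
    intro t
    rw [hB, smul_smul]
    congr 1
    field_simp
  constructor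
  · show (Xp * (1 - NormedSpace.exp ((-((0:ℝ) / (n : ℝ))) • A))) *ᵥ (Xᵀ *ᵥ y) = 0
    simp [NormedSpace.exp_zero]
  · intro t
    set c : Fin p → ℝ := Xᵀ *ᵥ y with hc
    set E : Matrix (Fin p) (Fin p) ℝ := NormedSpace.exp (t • B) with hE
    -- the continuous linear map `M ↦ M *ᵥ c`
    let L : Matrix (Fin p) (Fin p) ℝ →L[ℝ] (Fin p → ℝ) :=
      LinearMap.toContinuousLinearMap
        { toFun := fun M => M *ᵥ c
          map_add' := fun M N => Matrix.add_mulVec M N c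
          map_smul' := fun r M => Matrix.smul_mulVec r M c }
    have hL : ∀ M : Matrix (Fin p) (Fin p) ℝ, L M = M *ᵥ c := fun _ => rfl
    have hexp : HasDerivAt (fun u : ℝ => NormedSpace.exp (u • B)) (E * B) t :=
      hasDerivAt_exp_smul_const B t
    have hM : HasDerivAt (fun u : ℝ => Xp * (1 - NormedSpace.exp (u • B)))
        (Xp * (-(E * B))) t := by
      have := ((hasDerivAt_const t (1 : Matrix (Fin p) (Fin p) ℝ)).sub hexp).const_mul Xp
      simp at this ⊢
      exact this
    have hcomp := L.hasFDerivAt.comp_hasDerivAt t hM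
    have hEA : Commute A E := by
      have : Commute A (t • B) := by
        rw [hB]; exact ((Commute.refl A).smul_right _).smul_right _
      exact this.exp_right
    have hQE : Commute (Xp * A) E := by
      have : Commute (Xp * A) (t • B) := by
        rw [hB]
        refine (Commute.smul_right ?_ _).smul_right _
        show Xp * A * A = A * (Xp * A)
        rw [hQA, ← Matrix.mul_assoc, h1]
      exact this.exp_right
    have hPE : Commute (A * Xp) E := by
      have : Commute (A * Xp) (t • B) := by
        rw [hB]
        refine (Commute.smul_right ?_ _).smul_right _
        show A * Xp * A = A * (A * Xp)
        rw [h1, ← Matrix.mul_assoc, hAP]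
      exact this.exp_right
    have hkey : Xp * (E * A) * Xᵀ = (1 - A * Xp * (1 - E)) * Xᵀ := by
      have hl : Xp * (E * A) * Xᵀ = E * Xᵀ := by
        calc Xp * (E * A) * Xᵀ = Xp * (A * E) * Xᵀ := by rw [hEA.eq]
          _ = Xp * A * E * Xᵀ := by rw [← Matrix.mul_assoc Xp A E]
          _ = E * (Xp * A) * Xᵀ := by rw [hQE.eq]
          _ = E * (Xp * A * Xᵀ) := by rw [Matrix.mul_assoc E (Xp * A) Xᵀ]
          _ = E * Xᵀ := by rw [hQX]
      have hr : (1 - A * Xp * (1 - E)) * Xᵀ = E * Xᵀ := by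
        calc (1 - A * Xp * (1 - E)) * Xᵀ
            = Xᵀ - (A * Xp - A * Xp * E) * Xᵀ := by
              rw [Matrix.sub_mul, Matrix.one_mul, Matrix.mul_sub, Matrix.mul_one]
          _ = Xᵀ - (Xᵀ - A * Xp * E * Xᵀ) := by rw [Matrix.sub_mul, hPX]
          _ = A * Xp * E * Xᵀ := sub_sub_cancel _ _
          _ = E * (A * Xp) * Xᵀ := by rw [hPE.eq]
          _ = E * Xᵀ := by rw [Matrix.mul_assoc E (A * Xp) Xᵀ, hPX]
      rw [hl, hr]
    have hβt : β t = (Xp * (1 - E)) *ᵥ c := by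
      show (Xp * (1 - NormedSpace.exp ((-(t / (n : ℝ))) • A))) *ᵥ c = _
      rw [hsm t]
    have hfun : β = fun u => L (Xp * (1 - NormedSpace.exp (u • B))) := by
      funext u
      show (Xp * (1 - NormedSpace.exp ((-(u / (n : ℝ))) • A))) *ᵥ c = _
      rw [hsm u, hL]
    rw [hβt, hfun]
    convert hcomp using 1
    case e'_4 => rfl
    case e'_5 => rfl
    case e'_6 => rfl
    case e'_8 => rfl
    show _ = (Xp * -(E * B)) *ᵥ c
    have hEB : -(E * B) = (n : ℝ)⁻¹ • (E * A) := by
      rw [hB, mul_smul_comm, neg_smul, neg_neg]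
    rw [hEB, mul_smul_comm, Matrix.smul_mulVec]
    congr 1
    calc Xᵀ *ᵥ (y - X *ᵥ ((Xp * (1 - E)) *ᵥ c))
        = Xᵀ *ᵥ y - Xᵀ *ᵥ (X *ᵥ ((Xp * (1 - E)) *ᵥ c)) := by rw [Matrix.mulVec_sub]
      _ = c - (Xᵀ * X * (Xp * (1 - E))) *ᵥ c := by
          rw [Matrix.mulVec_mulVec, Matrix.mulVec_mulVec, ← hc]
      _ = (1 - A * Xp * (1 - E)) *ᵥ c := by
          rw [Matrix.sub_mulVec, Matrix.one_mulVec]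
          congr 1
          rw [← hA, ← Matrix.mul_assoc]
      _ = ((1 - A * Xp * (1 - E)) * Xᵀ) *ᵥ y := by rw [← Matrix.mulVec_mulVec, ← hc]
      _ = (Xp * (E * A) * Xᵀ) *ᵥ y := by rw [hkey]
      _ = (Xp * (E * A)) *ᵥ c := by rw [← Matrix.mulVec_mulVec, ← hc]
end

section
/- Let X^T X/n = V S V^T with V orthogonal (columns spanning the row space of X) and S diagonal with positive entries, and let t > 0. Then the gradient flow solution β(t) = (X^T X)^+ (I - exp(-t X^T X/n)) X^T y equals the unique minimizer of (1/n)‖y - Xβ‖_2^2 + β^T Q_t β over β in the row space of X, where Q_t = V S (exp(tS) - I)^{-1} V^T. -/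
open Matrix

section Aux

variable {p : ℕ}

/-- Product of two `V`-conjugated diagonal matrices. -/
lemma conj_diag_mul {V : Matrix (Fin p) (Fin p) ℝ} (hV' : Vᵀ * V = 1)
    (u v : Fin p → ℝ) :
    (V * diagonal u * Vᵀ) * (V * diagonal v * Vᵀ)
      = V * diagonal (fun i => u i * v i) * Vᵀ := by
  have : diagonal u * diagonal v = diagonal (fun i => u i * v i) := by
    rw [diagonal_mul_diagonal]
  calc (V * diagonal u * Vᵀ) * (V * diagonal v * Vᵀ)
      = V * diagonal u * (Vᵀ * V) * diagonal v * Vᵀ := by noncomm_ring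
    _ = V * (diagonal u * diagonal v) * Vᵀ := by rw [hV']; noncomm_ring
    _ = V * diagonal (fun i => u i * v i) * Vᵀ := by rw [this]

lemma conj_diag_sub {V : Matrix (Fin p) (Fin p) ℝ} (u v : Fin p → ℝ) :
    (V * diagonal u * Vᵀ) - (V * diagonal v * Vᵀ)
      = V * diagonal (fun i => u i - v i) * Vᵀ := by
  have : diagonal (fun i => u i - v i) = diagonal u - diagonal v := by
    rw [diagonal_sub]
  rw [this]; noncomm_ring

lemma conj_diag_add {V : Matrix (Fin p) (Fin p) ℝ} (u v : Fin p → ℝ) :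
    (V * diagonal u * Vᵀ) + (V * diagonal v * Vᵀ)
      = V * diagonal (fun i => u i + v i) * Vᵀ := by
  have : diagonal (fun i => u i + v i) = diagonal u + diagonal v := by
    rw [diagonal_add]
  rw [this]; noncomm_ring

/-- A one-sided Penrose condition pins down the inverse of an invertible matrix. -/
lemma penrose_eq_inv {A Ap B : Matrix (Fin p) (Fin p) ℝ}
    (h1 : A * Ap * A = A) (hAB : A * B = 1) (hBA : B * A = 1) : Ap = B := by
  calc Ap = 1 * Ap * 1 := by rw [Matrix.one_mul, Matrix.mul_one]
    _ = (B * A) * Ap * (A * B) := by rw [hAB, hBA]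
    _ = B * (A * Ap * A) * B := by noncomm_ring
    _ = B * A * B := by rw [h1]
    _ = B := by rw [hBA, Matrix.one_mul]

/-- Quadratic expansion around a critical point of a symmetric quadratic form. -/
lemma quad_expand {A : Matrix (Fin p) (Fin p) ℝ} (hA : Aᵀ = A)
    {b β0 : Fin p → ℝ} (hsol : A *ᵥ β0 = b) (β : Fin p → ℝ) :
    β ⬝ᵥ (A *ᵥ β) - 2 * (b ⬝ᵥ β)
      = (β - β0) ⬝ᵥ (A *ᵥ (β - β0)) + (β0 ⬝ᵥ (A *ᵥ β0) - 2 * (b ⬝ᵥ β0)) := by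
  have h1 : β0 ⬝ᵥ (A *ᵥ β) = b ⬝ᵥ β := by
    rw [dotProduct_mulVec, ← mulVec_transpose, hA, hsol]
  have h2 : β ⬝ᵥ (A *ᵥ β0) = b ⬝ᵥ β := by
    rw [hsol, dotProduct_comm]
  have h3 : β0 ⬝ᵥ (A *ᵥ β0) = b ⬝ᵥ β0 := by rw [hsol, dotProduct_comm]
  rw [mulVec_sub, dotProduct_sub, sub_dotProduct, sub_dotProduct, h1, h2, h3]
  ring

lemma diag_quadform_pos {a w : Fin p → ℝ} (ha : ∀ i, 0 < a i) (hw : w ≠ 0) :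
    0 < w ⬝ᵥ (diagonal a *ᵥ w) := by
  have hform : w ⬝ᵥ (diagonal a *ᵥ w) = ∑ i, a i * (w i) ^ 2 := by
    simp only [dotProduct, mulVec_diagonal]
    congr 1; ext i; ring
  rw [hform]
  obtain ⟨j, hj⟩ : ∃ j, w j ≠ 0 := by
    by_contra h; push_neg at h; exact hw (funext h)
  apply Finset.sum_pos'
  · intro i _
    have := ha i
    positivity
  · refine ⟨j, Finset.mem_univ j, ?_⟩
    have h2 : 0 < (w j) ^ 2 := by positivity
    exact mul_pos (ha j) h2

end Aux

/-- Gradient flow at time `t > 0` is the unique minimizer of the penalized least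
squares criterion `(1/n)‖y - Xβ‖² + βᵀ Q_t β`, where
`Q_t = V S (exp(tS) - I)⁻¹ Vᵀ`, given the eigendecomposition
`XᵀX/n = V S Vᵀ` with `V` orthogonal and `S` diagonal with positive entries
(full-rank case, so the row space of `X` is all of `ℝᵖ`). -/
theorem gradient_flow_minimizes_regularized_ls {n p : ℕ} (hn : 0 < n)
    (X : Matrix (Fin n) (Fin p) ℝ) (y : Fin n → ℝ)
    (V S : Matrix (Fin p) (Fin p) ℝ)
    (hV : V * Vᵀ = 1) (hV' : Vᵀ * V = 1)
    (hS : S.IsDiag) (hSpos : ∀ i, 0 < S i i)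
    (hdecomp : ((n : ℝ))⁻¹ • (Xᵀ * X) = V * S * Vᵀ)
    (Xp : Matrix (Fin p) (Fin p) ℝ) (hXp : IsMoorePenroseInv (Xᵀ * X) Xp)
    (t : ℝ) (ht : 0 < t) :
    let Qt : Matrix (Fin p) (Fin p) ℝ :=
      V * S * (NormedSpace.exp (t • S) - 1)⁻¹ * Vᵀ
    let βgf : Fin p → ℝ :=
      (Xp * (1 - NormedSpace.exp ((-(t / (n : ℝ))) • (Xᵀ * X)))) *ᵥ (Xᵀ *ᵥ y)
    let f : (Fin p → ℝ) → ℝ := fun β =>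
      (n : ℝ)⁻¹ * ((y - X *ᵥ β) ⬝ᵥ (y - X *ᵥ β)) + β ⬝ᵥ (Qt *ᵥ β)
    (∀ β, f βgf ≤ f β) ∧ (∀ β, f β = f βgf → β = βgf) := by
  intro Qt βgf f
  have hnR : (0:ℝ) < (n:ℝ) := by exact_mod_cast hn
  have hn0 : (n:ℝ) ≠ 0 := ne_of_gt hnR
  set d : Fin p → ℝ := fun i => S i i with hd
  have hSd : S = diagonal d := (hS.diagonal_diag).symm
  have hdpos : ∀ i, 0 < d i := hSpos
  -- exp(t•S)
  have hVunit : IsUnit V := (Matrix.isUnit_iff_isUnit_det V).mpr (Matrix.isUnit_det_of_right_inverse hV)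
  have hVinv : V⁻¹ = Vᵀ := inv_eq_right_inv hV
  have hexp_diag : ∀ c : ℝ, NormedSpace.exp (c • S)
      = diagonal (fun i => Real.exp (c * d i)) := by
    intro c
    rw [hSd, ← diagonal_smul, Matrix.exp_diagonal]
    rw [Pi.exp_def]
    funext i
    rw [← Real.exp_eq_exp_ℝ]
    simp [mul_comm]
  -- e_i := exp(t d i)
  set e : Fin p → ℝ := fun i => Real.exp (t * d i) with he
  have he1 : ∀ i, 1 < e i := by
    intro i
    have hpos : (0:ℝ) < t * d i := mul_pos ht (hdpos i)
    have := Real.add_one_le_exp (t * d i)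
    simp only [he]
    linarith
  have hesub : ∀ i, e i - 1 ≠ 0 := fun i => sub_ne_zero.mpr (ne_of_gt (he1 i))
  -- (exp(tS) - 1)⁻¹
  have hinv : (NormedSpace.exp (t • S) - 1)⁻¹
      = diagonal (fun i => (e i - 1)⁻¹) := by
    have h1 : NormedSpace.exp (t • S) - 1 = diagonal (fun i => e i - 1) := by
      rw [hexp_diag t, ← diagonal_one, diagonal_sub]
    rw [h1]
    apply inv_eq_right_inv
    rw [diagonal_mul_diagonal]
    have : (fun i => (e i - 1) * (e i - 1)⁻¹) = fun _ : Fin p => (1:ℝ) :=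
      funext fun i => mul_inv_cancel₀ (hesub i)
    rw [this, diagonal_one]
  -- Qt as conjugated diagonal
  set q : Fin p → ℝ := fun i => d i * (e i - 1)⁻¹ with hq
  have hQt : Qt = V * diagonal q * Vᵀ := by
    show V * S * (NormedSpace.exp (t • S) - 1)⁻¹ * Vᵀ = _
    rw [hinv, hSd, Matrix.mul_assoc V, diagonal_mul_diagonal]
  -- XᵀX as conjugated diagonal
  have hXX : Xᵀ * X = (n:ℝ) • (V * S * Vᵀ) := by
    rw [← hdecomp, smul_smul, mul_inv_cancel₀ hn0, one_smul]
  have hdiagsmul : diagonal (fun i => (n:ℝ) * d i) = (n:ℝ) • diagonal d := by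
    rw [← diagonal_smul]; rfl
  have hXtX : Xᵀ * X = V * diagonal (fun i => (n:ℝ) * d i) * Vᵀ := by
    rw [hXX, hSd, hdiagsmul]
    simp only [Matrix.smul_mul, Matrix.mul_smul]
  -- Xp is the inverse
  have hXpinv : Xp = V * diagonal (fun i => ((n:ℝ) * d i)⁻¹) * Vᵀ := by
    apply penrose_eq_inv hXp.1
    · rw [hXtX, conj_diag_mul hV']
      have : (fun i => (n:ℝ) * d i * ((n:ℝ) * d i)⁻¹) = fun _ : Fin p => (1:ℝ) := by
        funext i
        exact mul_inv_cancel₀ (mul_pos hnR (hdpos i)).ne' 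
      rw [this, diagonal_one, Matrix.mul_one, hV]
    · rw [hXtX, conj_diag_mul hV']
      have : (fun i => ((n:ℝ) * d i)⁻¹ * ((n:ℝ) * d i)) = fun _ : Fin p => (1:ℝ) := by
        funext i
        exact inv_mul_cancel₀ (mul_pos hnR (hdpos i)).ne' 
      rw [this, diagonal_one, Matrix.mul_one, hV]
  -- exp(-(t/n) • XᵀX)
  have hexpneg : NormedSpace.exp ((-(t / (n:ℝ))) • (Xᵀ * X))
      = V * diagonal (fun i => Real.exp (-t * d i)) * Vᵀ := by
    have harg : (-(t / (n:ℝ))) • (Xᵀ * X) = V * ((-t) • S) * V⁻¹ := by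
      rw [hXX, smul_smul, hVinv]
      have : -(t / (n:ℝ)) * (n:ℝ) = -t := by field_simp
      rw [this, Matrix.mul_smul, Matrix.smul_mul]
    rw [harg, Matrix.exp_conj V ((-t) • S) hVunit, hVinv, hexp_diag (-t)]
  -- the matrix defining βgf
  set g : Fin p → ℝ := fun i => ((n:ℝ) * d i)⁻¹ * (1 - Real.exp (-t * d i)) with hg
  have hBmat : Xp * (1 - NormedSpace.exp ((-(t / (n:ℝ))) • (Xᵀ * X)))
      = V * diagonal g * Vᵀ := by
    have hone : (1 : Matrix (Fin p) (Fin p) ℝ) = V * diagonal (fun _ => (1:ℝ)) * Vᵀ := by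
      rw [diagonal_one, Matrix.mul_one, hV]
    rw [hexpneg, hXpinv]
    nth_rewrite 1 [hone]
    rw [conj_diag_sub, conj_diag_mul hV']
  -- the Hessian-like matrix A'
  set a : Fin p → ℝ := fun i => d i + q i with ha
  have hapos : ∀ i, 0 < a i := by
    intro i
    have h1 : 0 < (e i - 1)⁻¹ := inv_pos.mpr (by linarith [he1 i])
    exact add_pos (hdpos i) (mul_pos (hdpos i) h1)
  set A' : Matrix (Fin p) (Fin p) ℝ := (n:ℝ)⁻¹ • (Xᵀ * X) + Qt with hA'
  have hA'diag : A' = V * diagonal a * Vᵀ := by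
    rw [hA', hdecomp, hQt, hSd, conj_diag_add]
  have hA'sym : A'ᵀ = A' := by
    rw [hA'diag, Matrix.transpose_mul, Matrix.transpose_mul, transpose_transpose,
      diagonal_transpose, Matrix.mul_assoc]
  -- key identity: A' * Bmat = (1/n) • 1
  have hkey : A' * (V * diagonal g * Vᵀ) = (n:ℝ)⁻¹ • 1 := by
    rw [hA'diag, conj_diag_mul hV']
    have hag : (fun i => a i * g i) = fun _ : Fin p => (n:ℝ)⁻¹ := by
      funext i
      simp only [ha, hq, hg, he]
      have hexp : Real.exp (-t * d i) = (Real.exp (t * d i))⁻¹ := by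
        rw [← Real.exp_neg]; ring_nf
      have hE : Real.exp (t * d i) ≠ 0 := (Real.exp_pos _).ne'
      have hd0 : d i ≠ 0 := (hdpos i).ne'
      have hE1 : Real.exp (t * d i) - 1 ≠ 0 := hesub i
      rw [hexp]
      field_simp
      have hk : Real.exp (t * d i) * (Real.exp (t * d i) - 1)⁻¹ - (Real.exp (t * d i) - 1)⁻¹ = 1 := by
        rw [← sub_one_mul, mul_inv_cancel₀ hE1]
      have hk' : Real.exp (d i * t) * (Real.exp (d i * t) - 1)⁻¹ - (Real.exp (d i * t) - 1)⁻¹ = 1 := by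
        rw [mul_comm (d i) t]; exact hk
      linear_combination hk'
    rw [hag]
    have hconst : diagonal (fun _ : Fin p => (n:ℝ)⁻¹) = (n:ℝ)⁻¹ • (1 : Matrix (Fin p) (Fin p) ℝ) := by
      have hfun : (fun _ : Fin p => (n:ℝ)⁻¹) = (n:ℝ)⁻¹ • (fun _ : Fin p => (1:ℝ)) := by
        funext i; simp
      rw [hfun, diagonal_smul, diagonal_one]
    rw [hconst]
    simp only [Matrix.smul_mul, Matrix.mul_smul, Matrix.mul_one, hV]
  -- solution property
  set b : Fin p → ℝ := (n:ℝ)⁻¹ • (Xᵀ *ᵥ y) with hb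
  have hsol : A' *ᵥ βgf = b := by
    show A' *ᵥ ((Xp * (1 - NormedSpace.exp ((-(t / (n:ℝ))) • (Xᵀ * X)))) *ᵥ (Xᵀ *ᵥ y)) = b
    rw [hBmat, mulVec_mulVec, hkey, hb, Matrix.smul_mulVec, Matrix.one_mulVec]
  -- f in quadratic form
  have hf : ∀ β, f β = β ⬝ᵥ (A' *ᵥ β) - 2 * (b ⬝ᵥ β) + (n:ℝ)⁻¹ * (y ⬝ᵥ y) := by
    intro β
    show (n : ℝ)⁻¹ * ((y - X *ᵥ β) ⬝ᵥ (y - X *ᵥ β)) + β ⬝ᵥ (Qt *ᵥ β) = _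
    have h1 : y ⬝ᵥ (X *ᵥ β) = (Xᵀ *ᵥ y) ⬝ᵥ β := by
      rw [dotProduct_mulVec, ← mulVec_transpose]
    have h2 : (X *ᵥ β) ⬝ᵥ (X *ᵥ β) = β ⬝ᵥ ((Xᵀ * X) *ᵥ β) := by
      rw [← mulVec_mulVec, dotProduct_mulVec (X *ᵥ β), ← mulVec_transpose,
        dotProduct_comm, dotProduct_mulVec, ← mulVec_transpose]
    have h3 : (X *ᵥ β) ⬝ᵥ y = (Xᵀ *ᵥ y) ⬝ᵥ β := by
      rw [dotProduct_comm, h1]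
    rw [dotProduct_sub, sub_dotProduct, sub_dotProduct, h1, h2, h3]
    rw [hA', Matrix.add_mulVec, dotProduct_add, Matrix.smul_mulVec,
      dotProduct_smul, hb, smul_dotProduct]
    simp only [smul_eq_mul]
    ring
  -- quadratic expansion
  have hexpand : ∀ β, f β = (β - βgf) ⬝ᵥ (A' *ᵥ (β - βgf)) + f βgf := by
    intro β
    have := quad_expand hA'sym hsol β
    rw [hf β, hf βgf]
    linarith [this]
  -- positivity of the quadratic form
  have hposdef : ∀ v : Fin p → ℝ, v ≠ 0 → 0 < v ⬝ᵥ (A' *ᵥ v) := by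
    intro v hv
    have hw : v ⬝ᵥ (A' *ᵥ v) = (Vᵀ *ᵥ v) ⬝ᵥ (diagonal a *ᵥ (Vᵀ *ᵥ v)) := by
      rw [hA'diag, ← mulVec_mulVec, ← mulVec_mulVec, dotProduct_mulVec v V,
        ← mulVec_transpose]
    have hwne : Vᵀ *ᵥ v ≠ 0 := by
      intro h
      apply hv
      have : V *ᵥ (Vᵀ *ᵥ v) = v := by
        rw [mulVec_mulVec, hV, Matrix.one_mulVec]
      rw [h, Matrix.mulVec_zero] at this
      exact this.symm
    rw [hw]
    exact diag_quadform_pos hapos hwne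
  constructor
  · intro β
    rcases eq_or_ne β βgf with rfl | hne
    · exact le_refl _
    · have := hposdef (β - βgf) (sub_ne_zero.mpr hne)
      have hx := hexpand β
      linarith
  · intro β hfe
    by_contra hne
    have := hposdef (β - βgf) (sub_ne_zero.mpr hne)
    have hx := hexpand β
    linarith
end
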